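/- arXiv:1709.05142 — 7 statements merged into one kernel-verified Lean document; each statement's English description precedes it below -/
import Mathlib

section
/- If two indices i,j are drawn independently and uniformly from {1,...,n} and x' is obtained from x by a gossip average between i and j, then E[mean of squares of x' | x] = (1 - 1/n)·(mean of squares of x) + (1/n)·(mean of x)². -/
open Finset

noncomputable def mean {n : ℕ} (v : Fin n → ℝ) : ℝ := (∑ k, v k) / n

noncomputable def meanSq {n : ℕ} (v : Fin n → ℝ) : ℝ := (∑ k, v k ^ 2) / n

noncomputable def gossip {n : ℕ} (v : Fin n → ℝ) (i j : Fin n) : Fin n → ℝ :=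
  fun k => if k = i ∨ k = j then (v i + v j) / 2 else v k

/-!
A gossip step between `i` and `j` lowers the sum of squares by exactly `(x i - x j)² / 2`, and
averaging `(x i - x j)²` over all ordered pairs gives twice the variance `meanSq x - (mean x)²`.
-/

theorem sum_sum_sub_sq {ι : Type*} [Fintype ι] (x : ι → ℝ) :
    ∑ i, ∑ j, (x i - x j) ^ 2 = 2 * Fintype.card ι * ∑ k, x k ^ 2 - 2 * (∑ k, x k) ^ 2 := by
  simp only [sub_sq, sum_add_distrib, sum_sub_distrib, sum_const, card_univ, nsmul_eq_mul,
    mul_assoc, ← mul_sum, ← sum_mul, sq (∑ k, x k)]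
  ring

section

variable {n : ℕ}

theorem gossip_self (x : Fin n → ℝ) (i : Fin n) : gossip x i i = x := by
  ext k
  by_cases hk : k = i
  · subst hk; simp [gossip]
  · simp [gossip, hk]

theorem sum_sq_gossip (x : Fin n → ℝ) (i j : Fin n) :
    ∑ k, gossip x i j k ^ 2 = ∑ k, x k ^ 2 - (x i - x j) ^ 2 / 2 := by
  obtain rfl | hij := eq_or_ne i j
  · simp [gossip_self]
  have h_off : ∀ k ∉ ({i, j} : Finset (Fin n)), gossip x i j k ^ 2 - x k ^ 2 = 0 := by
    intro k hk
    simp only [mem_insert, mem_singleton, not_or] at hk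
    simp [gossip, hk.1, hk.2]
  have h_diff : ∑ k, (gossip x i j k ^ 2 - x k ^ 2) = -(x i - x j) ^ 2 / 2 := by
    rw [← sum_subset (subset_univ _) fun k _ hk ↦ h_off k hk, sum_pair hij]
    simp only [gossip, true_or, or_true, if_true]
    ring
  rw [sum_sub_distrib] at h_diff
  linarith

theorem meanSq_gossip (x : Fin n → ℝ) (i j : Fin n) :
    meanSq (gossip x i j) = meanSq x - (x i - x j) ^ 2 / (2 * n) := by
  rw [meanSq, meanSq, sum_sq_gossip]
  ring

theorem sum_sum_sub_sq_div (x : Fin n → ℝ) :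
    (∑ i, ∑ j, (x i - x j) ^ 2) / (2 * n ^ 2) = meanSq x - mean x ^ 2 := by
  rw [sum_sum_sub_sq, Fintype.card_fin, meanSq, mean]
  obtain rfl | hn := eq_or_ne n 0
  · simp
  field_simp

end

theorem gossip_expected_meanSq_general (n : ℕ) (x : Fin n → ℝ) :
    (∑ i, ∑ j, meanSq (gossip x i j)) / (n : ℝ) ^ 2
      = (1 - 1 / n) * meanSq x + (1 / n) * (mean x) ^ 2 := by
  obtain rfl | hn := eq_or_ne n 0
  · simp [meanSq, mean]
  calc (∑ i, ∑ j, meanSq (gossip x i j)) / (n : ℝ) ^ 2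
      = meanSq x - (1 / n) * ((∑ i, ∑ j, (x i - x j) ^ 2) / (2 * n ^ 2)) := by
        simp only [meanSq_gossip, sum_sub_distrib, sum_const, card_univ, Fintype.card_fin,
          nsmul_eq_mul, ← sum_div]
        field_simp
    _ = (1 - 1 / n) * meanSq x + (1 / n) * (mean x) ^ 2 := by
        rw [sum_sum_sub_sq_div]
        ring

/-- With `i, j` i.i.d. uniform on `{1,…,n}`, the expected mean of squares after a gossip
step is `(1 - 1/n) * (mean of squares) + (1/n) * (mean)²`. -/
theorem gossip_expected_meanSq (n : ℕ) (hn : 0 < n) (x : Fin n → ℝ) :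
    (∑ i, ∑ j, meanSq (gossip x i j)) / (n : ℝ) ^ 2
      = (1 - 1 / n) * meanSq x + (1 / n) * (mean x) ^ 2 :=
  gossip_expected_meanSq_general n x
end

section
/- The affine map X ↦ A X + b with A = [[1−2p/n, p/n²], [(1−p)/n, 1−1/n]] and b = (pσ²/n², pσ²/n) has the unique fixed point (E x̄², E x²‾) = (σ²(p+1)/(p+2n−1), σ²(1+p(2n−1))/(p+2n−1)), for 0 < p ≤ 1 and n ≥ 2. -/
/-! A fixed point of `X ↦ A X + b` is a solution of `(1 - A) X = b`; here
`det (1 - A) = p (p + 2n - 1) / n³ ≠ 0`, so the fixed point is unique and it only remains to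
check that the stated vector is one. -/

open Matrix

theorem Matrix.eq_mulVec_add_iff_eq_of_det_one_sub_ne_zero {ι R : Type*} [Fintype ι]
    [DecidableEq ι] [CommRing R] [NoZeroDivisors R] {A : Matrix ι ι R} {b x₀ : ι → R}
    (hA : (1 - A).det ≠ 0) (hx₀ : x₀ = A *ᵥ x₀ + b) (x : ι → R) :
    x = A *ᵥ x + b ↔ x = x₀ := by
  have fixed_iff : ∀ y : ι → R, y = A *ᵥ y + b ↔ (1 - A) *ᵥ y = b := fun y => by
    rw [sub_mulVec, one_mulVec, sub_eq_iff_eq_add']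
  rw [fixed_iff, ← (fixed_iff x₀).1 hx₀]
  exact (mulVec_injective_of_det_ne_zero hA).eq_iff

theorem fixed_point_unique_general (n : ℕ) (hn : 2 ≤ n) (p σ2 : ℝ) (hp0 : 0 < p) :
    ∀ X : Fin 2 → ℝ,
      X = (!![1 - 2 * p / n, p / (n : ℝ) ^ 2;
              (1 - p) / n, 1 - 1 / n]).mulVec X + ![p * σ2 / (n : ℝ) ^ 2, p * σ2 / n]
      ↔ X = ![σ2 * (p + 1) / (p + 2 * n - 1),
              σ2 * (1 + p * (2 * (n : ℝ) - 1)) / (p + 2 * n - 1)] := by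
  have hn0 : (n : ℝ) ≠ 0 := by positivity
  have hd : p + 2 * (n : ℝ) - 1 ≠ 0 := by
    have : (2 : ℝ) ≤ n := by exact_mod_cast hn
    linarith
  refine Matrix.eq_mulVec_add_iff_eq_of_det_one_sub_ne_zero ?det ?fixed
  case det =>
    convert_to p * (p + 2 * n - 1) / (n : ℝ) ^ 3 ≠ 0 using 2
    · rw [one_fin_two, of_sub_of, det_fin_two]
      simp only [of_apply, Pi.sub_apply, cons_val_zero, cons_val_one, cons_val_fin_one]
      field_simp
      ring
    · exact div_ne_zero (mul_ne_zero hp0.ne' hd) (pow_ne_zero _ hn0)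
  case fixed =>
    rw [mulVec_fin_two]
    ext i
    fin_cases i <;>
      simp only [Fin.zero_eta, Fin.mk_one, of_apply, cons_val_zero, cons_val_one,
        cons_val_fin_one, Pi.add_apply] <;>
      field_simp <;> ring

/-- The affine map `X ↦ A X + b` of the fixed-size open gossip system has the unique fixed
point `(E x̄², E x²‾) = (σ²(p+1)/(p+2n−1), σ²(1+p(2n−1))/(p+2n−1))`. -/
theorem fixed_point_unique (n : ℕ) (hn : 2 ≤ n) (p σ2 : ℝ) (hp0 : 0 < p) (hp1 : p ≤ 1) :
    ∀ X : Fin 2 → ℝ,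
      X = (!![1 - 2 * p / n, p / (n : ℝ) ^ 2;
              (1 - p) / n, 1 - 1 / n]).mulVec X + ![p * σ2 / (n : ℝ) ^ 2, p * σ2 / n]
      ↔ X = ![σ2 * (p + 1) / (p + 2 * n - 1),
              σ2 * (1 + p * (2 * (n : ℝ) - 1)) / (p + 2 * n - 1)] :=
  fixed_point_unique_general n hn p σ2 hp0
end

section
/- For 0 < p < 1 and n ≥ 2, both eigenvalues r± = (2n − 2p − 1 ± √Δ)/(2n), Δ = (1−2p)² + 4p(1−p)/n, of the matrix A lie strictly in (0,1); hence the affine iteration X ↦ AX + b converges to its unique fixed point from any initial condition. -/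
/-!
Since `(1 - 2p)² + 4p(1 - p) = 1`, the discriminant is `Δ = 1 - 4p(1 - p)(1 - 1/n)`, which lies
in `(0, 1)`; hence so does `√Δ`, and both `r±` land in `(0, 1)`. For the iteration, `A` is
entrywise nonnegative with row sums at most `1 - p/n`, so `X ↦ A X + b` is a contraction for the
sup norm and Banach's fixed point theorem applies.
-/

open Matrix Filter

section LinftyOp

attribute [local instance] Matrix.linftyOpSeminormedAddCommGroup

theorem Matrix.lipschitzWith_mulVec_add {l m α : Type*} [Fintype l] [Fintype m]
    [NonUnitalSeminormedRing α] (A : Matrix l m α) (b : l → α) {K : NNReal}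
    (hrow : ∀ i, ∑ j, ‖A i j‖ ≤ K) :
    LipschitzWith K fun x => A *ᵥ x + b := by
  have hA : ‖A‖ ≤ K := by
    rw [linfty_opNorm_def, NNReal.coe_le_coe]
    exact Finset.sup_le fun i _ => by
      rw [← NNReal.coe_le_coe, NNReal.coe_sum]
      exact hrow i
  refine LipschitzWith.of_dist_le_mul fun x y => ?_
  rw [dist_eq_norm, add_sub_add_right_eq_sub, ← mulVec_sub, dist_eq_norm]
  exact (linfty_opNorm_mulVec A _).trans (mul_le_mul_of_nonneg_right hA (norm_nonneg _))

end LinftyOp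

theorem Matrix.contractingWith_mulVec_add_of_nonneg {m : Type*} [Fintype m]
    (A : Matrix m m ℝ) (b : m → ℝ) {K : NNReal} (hK : K < 1) (hA : ∀ i j, 0 ≤ A i j)
    (hrow : ∀ i, ∑ j, A i j ≤ K) :
    ContractingWith K fun x => A *ᵥ x + b :=
  ⟨hK, A.lipschitzWith_mulVec_add b fun i => by
    simpa only [Real.norm_of_nonneg (hA i _)] using hrow i⟩

theorem contractingWith_gossip {n p : ℝ} (σ2 : ℝ) (hn : 2 ≤ n) (hp0 : 0 < p) (hp1 : p < 1) :
    ContractingWith (1 - p / n).toNNReal fun X =>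
      !![1 - 2 * p / n, p / n ^ 2; (1 - p) / n, 1 - 1 / n] *ᵥ X + ![p * σ2 / n ^ 2, p * σ2 / n] := by
  have hn0 : 0 < n := by linarith
  have hpn : p / n < 1 := (div_lt_one hn0).mpr (by linarith)
  have hK : ((1 - p / n).toNNReal : ℝ) = 1 - p / n := Real.coe_toNNReal _ (by linarith)
  refine contractingWith_mulVec_add_of_nonneg _ _ ?_ ?_ ?_
  · rw [← NNReal.coe_lt_coe, hK, NNReal.coe_one]
    linarith [div_pos hp0 hn0]
  · have h2pn : 2 * p / n ≤ 1 := (div_le_one hn0).mpr (by linarith)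
    have h1n : 1 / n ≤ 1 := (div_le_one hn0).mpr (by linarith)
    simp only [Fin.forall_fin_two, of_apply, cons_val', cons_val_zero, cons_val_one, empty_val',
      cons_val_fin_one]
    exact ⟨⟨by linarith, by positivity⟩, div_nonneg (by linarith) hn0.le, by linarith⟩
  · simp only [Fin.forall_fin_two, Fin.sum_univ_two, of_apply, cons_val', cons_val_zero,
      cons_val_one, empty_val', cons_val_fin_one, hK]
    constructor
    · have : p / n ^ 2 ≤ p / n := div_le_div_of_nonneg_left hp0.le hn0 (by nlinarith)
      linarith [show 2 * p / n = 2 * (p / n) by ring]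
    · exact le_of_eq (by field_simp; ring)

theorem sqrt_discriminant_mem_Ioo {n p : ℝ} (hn : 1 < n) (hp0 : 0 < p) (hp1 : p < 1) :
    Real.sqrt ((1 - 2 * p) ^ 2 + 4 * p * (1 - p) / n) ∈ Set.Ioo 0 1 := by
  have hpq : 0 < 4 * p * (1 - p) := mul_pos (mul_pos four_pos hp0) (sub_pos.mpr hp1)
  have hpos : 0 < 4 * p * (1 - p) / n := div_pos hpq (by linarith)
  have hlt : 4 * p * (1 - p) / n < 4 * p * (1 - p) := div_lt_self hpq hn
  have hone : (1 - 2 * p) ^ 2 + 4 * p * (1 - p) = 1 := by ring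
  exact ⟨Real.sqrt_pos.mpr (add_pos_of_nonneg_of_pos (sq_nonneg _) hpos),
    (Real.sqrt_lt' one_pos).mpr (by linarith)⟩

theorem eigenvalue_mem_Ioo {n p s : ℝ} (hn : 2 ≤ n) (hp0 : 0 ≤ p) (hp1 : p ≤ 1) (hs : |s| < 1) :
    (2 * n - 2 * p - 1 + s) / (2 * n) ∈ Set.Ioo 0 1 := by
  have h2n : 0 < 2 * n := by linarith
  obtain ⟨hs₁, hs₂⟩ := abs_lt.mp hs
  exact ⟨div_pos (by linarith) h2n, (div_lt_one h2n).mpr (by linarith)⟩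

/-- For `0 < p < 1` and `n ≥ 2`, both eigenvalues
`r± = (2n − 2p − 1 ± √Δ)/(2n)`, `Δ = (1−2p)² + 4p(1−p)/n`, of `A` lie strictly in `(0,1)`;
hence the affine iteration `X ↦ A X + b` converges to its unique fixed point from any
initial condition. -/
theorem eigenvalues_in_unit_interval_and_convergence
    (n : ℕ) (hn : 2 ≤ n) (p σ2 : ℝ) (hp0 : 0 < p) (hp1 : p < 1) :
    (0 < (2 * (n : ℝ) - 2 * p - 1
            - Real.sqrt ((1 - 2 * p) ^ 2 + 4 * p * (1 - p) / n)) / (2 * n)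
      ∧ (2 * (n : ℝ) - 2 * p - 1
            - Real.sqrt ((1 - 2 * p) ^ 2 + 4 * p * (1 - p) / n)) / (2 * n) < 1)
    ∧ (0 < (2 * (n : ℝ) - 2 * p - 1
            + Real.sqrt ((1 - 2 * p) ^ 2 + 4 * p * (1 - p) / n)) / (2 * n)
      ∧ (2 * (n : ℝ) - 2 * p - 1
            + Real.sqrt ((1 - 2 * p) ^ 2 + 4 * p * (1 - p) / n)) / (2 * n) < 1)
    ∧ ∃ Xs : Fin 2 → ℝ,
        Xs = (!![1 - 2 * p / n, p / (n : ℝ) ^ 2;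
                 (1 - p) / n, 1 - 1 / n]).mulVec Xs + ![p * σ2 / (n : ℝ) ^ 2, p * σ2 / n]
        ∧ (∀ Y : Fin 2 → ℝ,
            Y = (!![1 - 2 * p / n, p / (n : ℝ) ^ 2;
                    (1 - p) / n, 1 - 1 / n]).mulVec Y + ![p * σ2 / (n : ℝ) ^ 2, p * σ2 / n]
            → Y = Xs)
        ∧ ∀ X0 : Fin 2 → ℝ,
            Tendsto
              (fun k => (fun X : Fin 2 → ℝ =>
                (!![1 - 2 * p / n, p / (n : ℝ) ^ 2;
                    (1 - p) / n, 1 - 1 / n]).mulVec X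
                  + ![p * σ2 / (n : ℝ) ^ 2, p * σ2 / n])^[k] X0)
              atTop (nhds Xs) := by
  have hn' : (2 : ℝ) ≤ n := by exact_mod_cast hn
  obtain ⟨hs0, hs1⟩ := sqrt_discriminant_mem_Ioo (n := n) (by linarith) hp0 hp1
  have hs : |Real.sqrt ((1 - 2 * p) ^ 2 + 4 * p * (1 - p) / n)| < 1 := by
    rwa [abs_of_pos hs0]
  have hminus := eigenvalue_mem_Ioo hn' hp0.le hp1.le ((abs_neg _).trans_lt hs)
  rw [← sub_eq_add_neg] at hminus
  have hF := contractingWith_gossip σ2 hn' hp0 hp1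
  exact ⟨hminus, eigenvalue_mem_Ioo hn' hp0.le hp1.le hs, hF.fixedPoint _,
    hF.fixedPoint_isFixedPt.symm, fun Y hY => hF.fixedPoint_unique hY.symm,
    hF.tendsto_iterate_fixedPoint⟩
end

section
/- Let q ≥ 0 and W_1 = 0, W_{n+1} = γ_n W_n + σ² with γ_n = n/(n+q_n) where q_n ≥ q for all n ≥ n_0. Then limsup_{n→∞} W_n/n ≤ σ²/(q+1). -/
/-!
Since `W ≥ 0` and `γ_n ≤ n/(n+q)` for `n ≥ n₀`, `W` grows no faster than under the recursion
`W_{n+1} = n/(n+q) W_n + σ²`. With `c = σ²/(q+1)` that recursion maps every line `c n + C`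
with `C ≥ c q` below `c (n+1) + C`, so `W_n ≤ c n + C` for all large `n`, and `W_n / n` has
limsup at most `c`.
-/

open Filter

theorem nonneg_of_eq_mul_add {W a : ℕ → ℝ} {b : ℝ} {N : ℕ} (hb : 0 ≤ b)
    (ha : ∀ n ≥ N, 0 ≤ a n) (hWN : 0 ≤ W N) (hW : ∀ n ≥ N, W (n + 1) = a n * W n + b) :
    ∀ n ≥ N, 0 ≤ W n := by
  intro n hn
  induction n, hn using Nat.le_induction with
  | base => exact hWN
  | succ n hn ih =>
    rw [hW n hn]
    have := ha n hn
    positivity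

/-- Cleared of denominators, the gap is `q (C - c q)`. -/
theorem div_add_mul_linear_le {n q c C : ℝ} (hn : 0 < n) (hq : 0 ≤ q) (hC : c * q ≤ C) :
    n / (n + q) * (c * n + C) + c * (q + 1) ≤ c * (n + 1) + C := by
  have hnq : 0 < n + q := by linarith
  rw [div_mul_eq_mul_div, ← sub_nonneg]
  have key : c * (n + 1) + C - (n * (c * n + C) / (n + q) + c * (q + 1))
      = q * (C - c * q) / (n + q) := by
    field_simp
    ring
  rw [key]
  have : 0 ≤ C - c * q := sub_nonneg.mpr hC
  positivity

theorem exists_le_linear_of_le_div_mul_add {W : ℕ → ℝ} {q c : ℝ} {N : ℕ} (hN : 1 ≤ N)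
    (hq : 0 ≤ q) (hW : ∀ n ≥ N, W (n + 1) ≤ n / (n + q) * W n + c * (q + 1)) :
    ∃ C, ∀ n ≥ N, W n ≤ c * n + C := by
  refine ⟨max (c * q) (W N - c * N), fun n hn => ?_⟩
  induction n, hn using Nat.le_induction with
  | base => linarith [le_max_right (c * q) (W N - c * N)]
  | succ n hn ih =>
    have hn_pos : (0 : ℝ) < n := by exact_mod_cast hN.trans hn
    push_cast
    calc W (n + 1) ≤ n / (n + q) * W n + c * (q + 1) := hW n hn
      _ ≤ n / (n + q) * (c * n + max (c * q) (W N - c * N)) + c * (q + 1) := by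
        gcongr
      _ ≤ c * (n + 1) + max (c * q) (W N - c * N) :=
        div_add_mul_linear_le hn_pos hq (le_max_left _ _)

theorem limsup_div_le_of_le_linear {W : ℕ → ℝ} {c C : ℝ} (hW_nonneg : ∀ᶠ n in atTop, 0 ≤ W n)
    (hW : ∀ᶠ n in atTop, W n ≤ c * n + C) :
    limsup (fun n : ℕ => W n / n) atTop ≤ c := by
  have hbound : ∀ᶠ n : ℕ in atTop, W n / n ≤ c + C / n := by
    filter_upwards [hW, eventually_gt_atTop 0] with n hn hn_pos
    have hn_pos : (0 : ℝ) < n := by exact_mod_cast hn_pos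
    rw [div_le_iff₀ hn_pos, add_mul, div_mul_cancel₀ _ hn_pos.ne']
    exact hn
  have htend : Tendsto (fun n : ℕ => c + C / n) atTop (nhds c) := by
    simpa using tendsto_const_nhds.add (tendsto_const_div_atTop_nhds_zero_nat C)
  have hcobdd : IsCoboundedUnder (· ≤ ·) atTop (fun n : ℕ => W n / n) :=
    isCoboundedUnder_le_of_eventually_le atTop (x := 0)
      (hW_nonneg.mono fun n hn => div_nonneg hn n.cast_nonneg)
  calc limsup (fun n : ℕ => W n / n) atTop
      ≤ limsup (fun n : ℕ => c + C / n) atTop :=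
        limsup_le_limsup hbound hcobdd htend.isBoundedUnder_le
    _ = c := htend.limsup_eq

theorem growing_limsup_bound_general (σ2 : ℝ) (hσ : 0 < σ2) (n0 : ℕ)
    (q : ℝ) (hq : 0 ≤ q) (qn : ℕ → ℝ) (hqn_pos : ∀ n, 0 < qn n)
    (hqn : ∀ n ≥ n0, q ≤ qn n)
    (W : ℕ → ℝ) (hW1 : W 1 = 0)
    (hW : ∀ n ≥ 1, W (n + 1) = ((n : ℝ) / ((n : ℝ) + qn n)) * W n + σ2) :
    limsup (fun n : ℕ => W n / n) atTop ≤ σ2 / (q + 1) := by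
  have hσ_eq : σ2 / (q + 1) * (q + 1) = σ2 := div_mul_cancel₀ _ (by linarith)
  have hW_nonneg : ∀ n ≥ 1, 0 ≤ W n :=
    nonneg_of_eq_mul_add hσ.le (fun n _ => by have := hqn_pos n; positivity) hW1.ge hW
  have hW_le : ∀ n ≥ max n0 1, W (n + 1) ≤ n / (n + q) * W n + σ2 / (q + 1) * (q + 1) := by
    intro n hn
    have hn_pos : (0 : ℝ) < n := by exact_mod_cast le_of_max_le_right hn
    have := hW_nonneg n (le_of_max_le_right hn)
    rw [hW n (le_of_max_le_right hn), hσ_eq]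
    gcongr
    exact hqn n (le_of_max_le_left hn)
  obtain ⟨C, hC⟩ := exists_le_linear_of_le_div_mul_add (le_max_right n0 1) hq hW_le
  exact limsup_div_le_of_le_linear (eventually_atTop.mpr ⟨1, hW_nonneg⟩)
    (eventually_atTop.mpr ⟨_, hC⟩)

/-- If `W_1 = 0`, `W_{n+1} = γ_n W_n + σ²` with `γ_n = n/(n+q_n)` and `q_n ≥ q ≥ 0` for
all `n ≥ n_0`, then `limsup W_n / n ≤ σ²/(q+1)`. -/
theorem growing_limsup_bound (σ2 : ℝ) (hσ : 0 < σ2) (n0 : ℕ) (hn0 : 2 ≤ n0)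
    (q : ℝ) (hq : 0 ≤ q) (qn : ℕ → ℝ) (hqn_pos : ∀ n, 0 < qn n)
    (hqn : ∀ n ≥ n0, q ≤ qn n)
    (W : ℕ → ℝ) (hW1 : W 1 = 0)
    (hW : ∀ n ≥ 1, W (n + 1) = ((n : ℝ) / ((n : ℝ) + qn n)) * W n + σ2) :
    limsup (fun n : ℕ => W n / n) atTop ≤ σ2 / (q + 1) :=
  growing_limsup_bound_general σ2 hσ n0 q hq qn hqn_pos hqn W hW1 hW
end

section
/- Let W_1 = 0 and W_{n+1} = γ_n W_n + σ² with γ_n = n/(n + q_n), q_n = 1/p_n − 1, p_n ∈ (0,1). If p_n = p for all n ≥ n_0 (some fixed p ∈ (0,1) and n_0), then lim_{n→∞} W_n/n = pσ². -/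
open Filter

/-- If `W_1 = 0`, `W_{n+1} = γ_n W_n + σ²` with `γ_n = n/(n + q_n)`, `q_n = 1/p_n − 1`,
`p_n ∈ (0,1)`, and `p_n = p` for all `n ≥ n_0`, then `W_n / n → p σ²`. -/
theorem growing_constant_rate (σ2 : ℝ) (hσ : 0 < σ2)
    (p : ℕ → ℝ) (hp : ∀ n, 0 < p n ∧ p n < 1)
    (pc : ℝ) (hpc0 : 0 < pc) (hpc1 : pc < 1)
    (n0 : ℕ) (hconst : ∀ n ≥ n0, p n = pc)
    (W : ℕ → ℝ) (hW1 : W 1 = 0)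
    (hW : ∀ n ≥ 1, W (n + 1) = ((n : ℝ) / ((n : ℝ) + (1 / p n - 1))) * W n + σ2) :
    Tendsto (fun n : ℕ => W n / n) atTop (nhds (pc * σ2)) := by
  set q : ℝ := 1 / pc - 1 with hqdef
  have hq : 0 < q := by
    rw [hqdef, sub_pos, lt_div_iff₀ hpc0]; linarith
  have h1q : pc * (1 + q) = 1 := by
    rw [hqdef]; field_simp; ring
  clear_value q
  set m := max n0 1 with hm
  set D : ℕ → ℝ := fun n => W n - pc * σ2 * ((n : ℝ) + q) with hD
  have key : ∀ n, m ≤ n → |D n| ≤ |D m| := by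
    intro n hn
    induction n, hn using Nat.le_induction with
    | base => exact le_refl _
    | succ n hn ih =>
      have hn1 : 1 ≤ n := le_trans (le_max_right _ _) hn
      have hn0 : n0 ≤ n := le_trans (le_max_left _ _) hn
      have hnR : (1 : ℝ) ≤ (n : ℝ) := by exact_mod_cast hn1
      have hrec := hW n hn1
      rw [hconst n hn0, ← hqdef] at hrec
      have hnq : 0 < (n : ℝ) + q := by linarith
      have hstep : D (n + 1) = ((n : ℝ) / ((n : ℝ) + q)) * D n := by
        simp only [hD]
        rw [hrec]
        push_cast
        field_simp
        linear_combination (-(σ2 * ((n : ℝ) + q))) * h1q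
      have habs : |(n : ℝ) / ((n : ℝ) + q)| ≤ 1 := by
        rw [abs_of_nonneg (by positivity)]
        rw [div_le_one hnq]; linarith
      calc |D (n + 1)| = |(n : ℝ) / ((n : ℝ) + q)| * |D n| := by rw [hstep, abs_mul]
        _ ≤ 1 * |D n| := by gcongr
        _ = |D n| := one_mul _
        _ ≤ |D m| := ih
  have hDtend : Tendsto (fun n : ℕ => D n / n) atTop (nhds 0) := by
    apply squeeze_zero_norm' (a := fun n : ℕ => |D m| / n)
    · filter_upwards [eventually_ge_atTop m] with n hn
      have hn1 : (1 : ℝ) ≤ (n : ℝ) := by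
        exact_mod_cast le_trans (le_max_right _ _) hn
      rw [Real.norm_eq_abs, abs_div, abs_of_nonneg (by positivity : (0:ℝ) ≤ (n:ℝ))]
      exact (div_le_div_iff_of_pos_right (by linarith)).2 (key n hn)
    · exact tendsto_const_div_atTop_nhds_zero_nat _
  have hqtend : Tendsto (fun n : ℕ => pc * σ2 * q / n) atTop (nhds 0) :=
    tendsto_const_div_atTop_nhds_zero_nat _
  have hsum : Tendsto (fun n : ℕ => pc * σ2 + (D n / n + pc * σ2 * q / n)) atTop
      (nhds (pc * σ2)) := by
    have := tendsto_const_nhds (x := pc * σ2) (f := atTop (α := ℕ)) |>.add (hDtend.add hqtend)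
    simpa using this
  apply hsum.congr'
  filter_upwards [eventually_ge_atTop (max m 1)] with n hn
  have hn1 : 1 ≤ n := le_trans (le_max_right _ _) hn
  have hnR : (1 : ℝ) ≤ (n : ℝ) := by exact_mod_cast hn1
  have hn0 : (n : ℝ) ≠ 0 := by linarith
  simp only [hD]
  field_simp
  ring
end

section
/- Let W_1 = 0 and W_{n+1} = γ_n W_n + σ² with γ_n = n/(n + q_n), q_n = 1/p_n − 1, p_n ∈ (0,1). If p_n → 0 as n → ∞, then W_n/n → 0; i.e., the expected variance E Var(x(t_n)) = W_n/n converges to 0. -/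
/-! The recursion `W_{n+1} = n/(n + q_n) W_n + σ²` pulls `W_n` towards its equilibrium
`σ² (1 + n/q_n)`, and `n/q_n = o(n)` because `q_n → ∞`. Concretely, once `σ² ≤ δ q_n` the affine
bound `W_n ≤ C + δ n` propagates from one step to the next, so `W_n = o(n)`. -/

open Filter Asymptotics

lemma isLittleO_natCast_of_forall_le_add_mul {f : ℕ → ℝ}
    (h : ∀ δ > 0, ∃ C, ∀ᶠ n in atTop, |f n| ≤ C + δ * n) :
    f =o[atTop] (fun n : ℕ => (n : ℝ)) := by
  rw [isLittleO_iff]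
  intro c hc
  obtain ⟨C, hC⟩ := h (c / 2) (by positivity)
  have hCn : ∀ᶠ n : ℕ in atTop, 2 * C / c ≤ n :=
    tendsto_natCast_atTop_atTop.eventually_ge_atTop _
  filter_upwards [hC, hCn] with n hfn hn
  rw [div_le_iff₀ hc] at hn
  rw [Real.norm_eq_abs, Real.norm_natCast]
  linarith

lemma div_add_mul_add_le {x q s δ : ℝ} (hx : 0 < x) (hq : 0 ≤ q) (hsq : s ≤ δ * q) :
    x / (x + q) * (s + δ * x) ≤ δ * x := by
  rw [div_mul_eq_mul_div, div_le_iff₀ (by positivity)]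
  nlinarith

section GrowingRecursion

variable {s : ℝ} {q W : ℕ → ℝ}

lemma growingRecursion_nonneg (hs : 0 ≤ s) (hq : ∀ n, 0 ≤ q n) (hW1 : 0 ≤ W 1)
    (hW : ∀ n ≥ 1, W (n + 1) = (n : ℝ) / (n + q n) * W n + s) :
    ∀ n ≥ 1, 0 ≤ W n := by
  intro n hn
  induction n, hn using Nat.le_induction with
  | base => exact hW1
  | succ n hn ih =>
    rw [hW n hn]
    have hγ : 0 ≤ (n : ℝ) / (n + q n) := div_nonneg n.cast_nonneg (by linarith [hq n])
    exact add_nonneg (mul_nonneg hγ ih) hs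

lemma growingRecursion_le_const_add_mul (hs : 0 ≤ s) (hq : ∀ n, 0 ≤ q n) (hW1 : 0 ≤ W 1)
    (hW : ∀ n ≥ 1, W (n + 1) = (n : ℝ) / (n + q n) * W n + s)
    {δ : ℝ} (hδ : 0 ≤ δ) {N : ℕ} (hN : 1 ≤ N) (hsq : ∀ n ≥ N, s ≤ δ * q n) :
    ∀ n ≥ N, W n ≤ W N + s + δ * n := by
  have hWN : 0 ≤ W N := growingRecursion_nonneg hs hq hW1 hW N hN
  intro n hn
  induction n, hn using Nat.le_induction with
  | base => linarith [mul_nonneg hδ N.cast_nonneg]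
  | succ n hn ih =>
    have hnpos : (0 : ℝ) < n := by exact_mod_cast hN.trans hn
    set γ := (n : ℝ) / (n + q n)
    have hγ0 : 0 ≤ γ := div_nonneg hnpos.le (by linarith [hq n])
    have hγ1 : γ ≤ 1 := div_le_one_of_le₀ (by linarith [hq n]) (by linarith [hq n])
    have hstep : γ * (s + δ * n) ≤ δ * n := div_add_mul_add_le hnpos (hq n) (hsq n hn)
    rw [hW n (hN.trans hn)]
    push_cast
    linarith [mul_le_mul_of_nonneg_left ih hγ0, mul_le_of_le_one_left hWN hγ1]

theorem growingRecursion_isLittleO (hs : 0 ≤ s) (hq : ∀ n, 0 ≤ q n)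
    (hq_top : Tendsto q atTop atTop) (hW1 : 0 ≤ W 1)
    (hW : ∀ n ≥ 1, W (n + 1) = (n : ℝ) / (n + q n) * W n + s) :
    W =o[atTop] (fun n : ℕ => (n : ℝ)) := by
  refine isLittleO_natCast_of_forall_le_add_mul fun δ hδ => ?_
  obtain ⟨N, hN⟩ := eventually_atTop.1
    ((hq_top.eventually_ge_atTop (s / δ)).and (eventually_ge_atTop 1))
  have hsq : ∀ n ≥ N, s ≤ δ * q n := fun n hn => (div_le_iff₀' hδ).1 (hN n hn).1
  refine ⟨W N + s, eventually_atTop.2 ⟨N, fun n hn => ?_⟩⟩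
  rw [abs_of_nonneg (growingRecursion_nonneg hs hq hW1 hW n ((hN N le_rfl).2.trans hn))]
  exact growingRecursion_le_const_add_mul hs hq hW1 hW hδ.le (hN N le_rfl).2 hsq n hn

end GrowingRecursion

lemma tendsto_one_div_sub_one_atTop {p : ℕ → ℝ} (hp : ∀ n, 0 < p n)
    (hp0 : Tendsto p atTop (nhds 0)) :
    Tendsto (fun n => 1 / p n - 1) atTop atTop := by
  have hp0' : Tendsto p atTop (nhdsWithin 0 (Set.Ioi 0)) :=
    tendsto_nhdsWithin_iff.2 ⟨hp0, Eventually.of_forall hp⟩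
  simpa only [one_div, sub_eq_add_neg, Function.comp_def] using
    tendsto_atTop_add_const_right _ (-1) (tendsto_inv_nhdsGT_zero.comp hp0')

/-- If `W_1 = 0`, `W_{n+1} = γ_n W_n + σ²` with `γ_n = n/(n + q_n)`, `q_n = 1/p_n − 1`,
`p_n ∈ (0,1)`, and `p_n → 0`, then the expected variance `W_n / n` converges to `0`. -/
theorem growing_vanishing_rate (σ2 : ℝ) (hσ : 0 < σ2)
    (p : ℕ → ℝ) (hp : ∀ n, 0 < p n ∧ p n < 1)
    (hp0 : Tendsto p atTop (nhds 0))
    (W : ℕ → ℝ) (hW1 : W 1 = 0)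
    (hW : ∀ n ≥ 1, W (n + 1) = ((n : ℝ) / ((n : ℝ) + (1 / p n - 1))) * W n + σ2) :
    Tendsto (fun n : ℕ => W n / n) atTop (nhds 0) := by
  have hq : ∀ n, 0 ≤ 1 / p n - 1 := fun n => by
    linarith [one_le_one_div (hp n).1 (hp n).2.le]
  have hq_top := tendsto_one_div_sub_one_atTop (fun n => (hp n).1) hp0
  exact (growingRecursion_isLittleO hσ.le hq hq_top hW1.ge hW).tendsto_div_nhds_zero
end

section
/- For every real q > 0 and integers n > s ≥ 2, the product ∏_{m=s}^{n-1} m/(m+q) ≤ ((s+q)/(n+q))^q. -/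
/-!
Writing `m / (m + q) = 1 - q / (m + q)`, each factor is at most `exp (-q / (m + q))`, which in
turn is at most `((m + q) / (m + q + 1)) ^ q` because `log (1 + 1 / x) ≤ 1 / x`. The product of
the factors `(m + q) / (m + q + 1)` telescopes to `(s + q) / (n + q)`.
-/

open Finset Real

theorem Finset.prod_Ico_div_succ_eq_div {K : Type*} [Field K] {f : ℕ → K} (hf : ∀ i, f i ≠ 0)
    {m n : ℕ} (hmn : m ≤ n) : ∏ i ∈ Ico m n, f i / f (i + 1) = f m / f n := by
  induction n, hmn using Nat.le_induction with
  | base => simp [hf m]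
  | succ n hmn ih =>
    rw [prod_Ico_succ_top hmn, ih]
    field_simp [hf]

theorem Real.one_sub_div_le_div_add_one_rpow {x q : ℝ} (hx : 0 < x) (hq : 0 ≤ q) :
    1 - q / x ≤ (x / (x + 1)) ^ q := by
  have hlog : -x⁻¹ ≤ log (x / (x + 1)) := by
    have h := one_sub_inv_le_log_of_pos (div_pos hx (by linarith : 0 < x + 1))
    rwa [inv_div, add_div, div_self hx.ne', sub_add_cancel_left, one_div] at h
  calc 1 - q / x ≤ exp (-(q / x)) := one_sub_le_exp_neg _
    _ = exp (-x⁻¹ * q) := by ring_nf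
    _ ≤ exp (log (x / (x + 1)) * q) := exp_le_exp.2 (mul_le_mul_of_nonneg_right hlog hq)
    _ = (x / (x + 1)) ^ q := (rpow_def_of_pos (by positivity) q).symm

theorem product_estimate_general (q : ℝ) (hq : 0 < q) (s n : ℕ) (hn : s < n) :
    ∏ m ∈ Finset.Ico s n, ((m : ℝ) / ((m : ℝ) + q))
      ≤ (((s : ℝ) + q) / ((n : ℝ) + q)) ^ q := by
  have hpos (m : ℕ) : 0 < (m : ℝ) + q := by positivity
  have hfactor (m : ℕ) : (m : ℝ) / (m + q) ≤ ((m + q) / ((m + 1 : ℕ) + q)) ^ q := by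
    have h := one_sub_div_le_div_add_one_rpow (hpos m) hq.le
    rwa [one_sub_div (hpos m).ne', add_sub_cancel_right, add_right_comm, ← Nat.cast_succ] at h
  calc ∏ m ∈ Ico s n, (m : ℝ) / (m + q)
      ≤ ∏ m ∈ Ico s n, ((m + q) / ((m + 1 : ℕ) + q)) ^ q :=
        prod_le_prod (fun m _ => by positivity) fun m _ => hfactor m
    _ = (∏ m ∈ Ico s n, (m + q) / ((m + 1 : ℕ) + q)) ^ q :=
        finsetProd_rpow _ _ (fun m _ => by positivity) q
    _ = ((s + q) / (n + q)) ^ q := by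
        rw [prod_Ico_div_succ_eq_div (f := fun m : ℕ => (m : ℝ) + q) (fun m => (hpos m).ne') hn.le]

/-- For every real `q > 0` and integers `n > s ≥ 2`,
`∏_{m=s}^{n-1} m/(m+q) ≤ ((s+q)/(n+q))^q` (real power). -/
theorem product_estimate (q : ℝ) (hq : 0 < q) (s n : ℕ) (hs : 2 ≤ s) (hn : s < n) :
    ∏ m ∈ Finset.Ico s n, ((m : ℝ) / ((m : ℝ) + q))
      ≤ (((s : ℝ) + q) / ((n : ℝ) + q)) ^ q :=
  product_estimate_general q hq s n hn
end
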